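/- For all integers 1 ≤ ℓ ≤ j ≤ n, the identity (−1)^j · L*(ℓ,j) = Σ_{k=ℓ+1}^{j} (−1)^k · L(k,j) · L*(ℓ,k−1) + (−1)^ℓ · L(ℓ,j) holds in R. -/

import Mathlib

open scoped BigOperators

/-- `Lser f ℓ j = L(ℓ,j) = Σ_{i_ℓ > i_{ℓ+1} > ⋯ > i_j ≥ 0} f_ℓ(i_ℓ)⋯f_j(i_j)`,
the sum over strictly decreasing tuples of nonnegative integers.
By convention `Lser f ℓ (ℓ-1) = 1` (empty tuple). -/
noncomputable def Lser {R : Type*} [NormedCommRing R] (f : ℕ → ℕ → R) (ℓ j : ℕ) : R :=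
  ∑' g : {g : Fin (j + 1 - ℓ) → ℕ // StrictAnti g},
    ∏ m : Fin (j + 1 - ℓ), f (ℓ + (m : ℕ)) (g.1 m)

/-- `Lstar f ℓ j = L*(ℓ,j) = Σ_{0 ≤ i_ℓ ≤ i_{ℓ+1} ≤ ⋯ ≤ i_j} f_ℓ(i_ℓ)⋯f_j(i_j)`,
the sum over weakly increasing tuples of nonnegative integers.
By convention `Lstar f ℓ (ℓ-1) = 1` (empty tuple). -/
noncomputable def Lstar {R : Type*} [NormedCommRing R] (f : ℕ → ℕ → R) (ℓ j : ℕ) : R :=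
  ∑' g : {g : Fin (j + 1 - ℓ) → ℕ // Monotone g},
    ∏ m : Fin (j + 1 - ℓ), f (ℓ + (m : ℕ)) (g.1 m)

/-!
Expand `L(k,j) · L*(ℓ,k-1)` as a sum over pairs `(a, b)` of a strictly decreasing tuple `a`
(indices `k, …, j`) and a weakly increasing tuple `b` (indices `ℓ, …, k-1`); in a complete
ultrametric ring this is legitimate because every family of products of null sequences is summable.
Split the pairs according to whether `max b ≤ max a = a₀`. Moving `a₀` from the front of `a` to the
end of `b` is a weight-preserving bijection from the dominated pairs for `k` onto the undominated
pairs for `k + 1`, so `∑_{k=ℓ}^{j+1} (-1)^k L(k,j) L*(ℓ,k-1)` telescopes to `0`; its terms `k = ℓ`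
and `k = j + 1` are `(-1)^ℓ L(ℓ,j)` and `(-1)^(j+1) L*(ℓ,j)`.
-/

open Filter Topology

instance IsUltrametricDist.nonarchimedeanRing {R : Type*} [NormedRing R] [IsUltrametricDist R] :
    NonarchimedeanRing R where
  is_nonarchimedean := NonarchimedeanAddGroup.is_nonarchimedean

section Summability

variable {R : Type*} [NormedCommRing R] [IsUltrametricDist R] [CompleteSpace R]

theorem summable_of_tendsto_norm_zero {u : ℕ → R} (hu : Tendsto (fun x => ‖u x‖) atTop (𝓝 0)) :
    Summable u :=
  NonarchimedeanAddGroup.summable_of_tendsto_cofinite_zero <| by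
    rwa [Nat.cofinite_eq_atTop, tendsto_zero_iff_norm_tendsto_zero]

theorem summable_prod_of_tendsto_norm_zero {m : ℕ} {u : Fin m → ℕ → R}
    (hu : ∀ i, Tendsto (fun x => ‖u i x‖) atTop (𝓝 0)) :
    Summable fun a : Fin m → ℕ => ∏ i, u i (a i) := by
  induction m with
  | zero => exact .of_finite
  | succ m ih =>
    have hcons := (summable_of_tendsto_norm_zero (hu 0)).mul_of_nonarchimedean
      (ih (u := fun i => u i.succ) fun i => hu i.succ)
    rw [← (Fin.consEquiv fun _ => ℕ).summable_iff]
    simpa [Function.comp_def, Fin.prod_univ_succ] using hcons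

end Summability

theorem Monotone.fin_snoc {α : Type*} [Preorder α] {e : ℕ} {b : Fin e → α} (hb : Monotone b)
    {x : α} (hx : ∀ i, b i ≤ x) : Monotone (Fin.snoc b x : Fin (e + 1) → α) := by
  intro i k hik
  induction k using Fin.lastCases with
  | last =>
    induction i using Fin.lastCases with
    | last => exact le_rfl
    | cast i => simpa using hx i
  | cast k =>
    induction i using Fin.lastCases with
    | last => exact absurd hik (not_le.2 (Fin.castSucc_lt_last k))
    | cast i => simpa using hb hik

theorem StrictAnti.fin_cons {α : Type*} [Preorder α] {d : ℕ} {a : Fin d → α} (ha : StrictAnti a)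
    {x : α} (hx : ∀ m, a m < x) : StrictAnti (Fin.cons x a : Fin (d + 1) → α) :=
  (Fin.liftFun_cons (· > ·)).2 ⟨hx, ha⟩

/-- The index set of the expanded product `L(k,j) · L*(ℓ,k-1)`. -/
abbrev DecIncPair (c e : ℕ) : Type :=
  {a : Fin c → ℕ // StrictAnti a} × {b : Fin e → ℕ // Monotone b}

namespace DecIncPair

def dominated (c e : ℕ) : Set (DecIncPair c e) :=
  {z | ∃ m, ∀ i, z.2.1 i ≤ z.1.1 m}

variable {R : Type*} [NormedCommRing R]

def weight {c e : ℕ} (u : Fin c → ℕ → R) (v : Fin e → ℕ → R) (z : DecIncPair c e) : R :=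
  (∏ i, u i (z.1.1 i)) * ∏ i, v i (z.2.1 i)

theorem tsum_mul_tsum_eq_tsum_dominated_add_tsum_compl [IsUltrametricDist R] [CompleteSpace R]
    {c e : ℕ} {u : Fin c → ℕ → R} {v : Fin e → ℕ → R}
    (hu : ∀ i, Tendsto (fun x => ‖u i x‖) atTop (𝓝 0))
    (hv : ∀ i, Tendsto (fun x => ‖v i x‖) atTop (𝓝 0)) :
    (∑' a : {a : Fin c → ℕ // StrictAnti a}, ∏ i, u i (a.1 i)) *
        ∑' b : {b : Fin e → ℕ // Monotone b}, ∏ i, v i (b.1 i) =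
      ∑' z : dominated c e, weight u v z + ∑' z : ↑(dominated c e)ᶜ, weight u v z := by
  have hA : Summable fun a : {a : Fin c → ℕ // StrictAnti a} => ∏ i, u i (a.1 i) :=
    (summable_prod_of_tendsto_norm_zero hu).comp_injective Subtype.val_injective
  have hB : Summable fun b : {b : Fin e → ℕ // Monotone b} => ∏ i, v i (b.1 i) :=
    (summable_prod_of_tendsto_norm_zero hv).comp_injective Subtype.val_injective
  rw [tsum_mul_tsum_of_nonarchimedean hA hB]
  exact ((hA.mul_of_nonarchimedean hB).tsum_subtype_add_tsum_subtype_compl _).symm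

/-- Moving the largest entry of the decreasing tuple to the end of the increasing one. -/
def dominatedEquiv (d e : ℕ) : dominated (d + 1) e ≃ ↥(dominated d (e + 1))ᶜ where
  toFun z :=
    ⟨⟨⟨Fin.tail z.1.1.1, z.1.1.2.comp_strictMono Fin.strictMono_succ⟩,
      ⟨Fin.snoc z.1.2.1 (z.1.1.1 0), z.1.2.2.fin_snoc fun i => by
        obtain ⟨m, hm⟩ := z.2
        exact (hm i).trans (z.1.1.2.antitone (Fin.zero_le m))⟩⟩,
      fun ⟨m, hm⟩ => by
        have hlast := hm (Fin.last e)
        simp only [Fin.snoc_last] at hlast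
        exact absurd hlast (not_le.2 (z.1.1.2 (Fin.succ_pos m)))⟩
  invFun z :=
    ⟨⟨⟨Fin.cons (z.1.2.1 (Fin.last e)) z.1.1.1, z.1.1.2.fin_cons fun m => by
        obtain ⟨i, hi⟩ := not_forall.1 (not_exists.1 z.2 m)
        exact (not_le.1 hi).trans_le (z.1.2.2 (Fin.le_last i))⟩,
      ⟨Fin.init z.1.2.1, z.1.2.2.comp Fin.strictMono_castSucc.monotone⟩⟩,
      ⟨0, fun i => z.1.2.2 (Fin.le_last _)⟩⟩
  left_inv z := by
    ext : 3
    · simp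
    · simp
  right_inv z := by
    ext : 3
    · simp
    · simp

theorem tsum_dominated_eq_tsum_compl {d e : ℕ} {u : Fin (d + 1) → ℕ → R} {v : Fin e → ℕ → R}
    {u' : Fin d → ℕ → R} {v' : Fin (e + 1) → ℕ → R} (hu' : ∀ i, u' i = u i.succ)
    (hv' : ∀ i, v' i.castSucc = v i) (hv'_last : v' (Fin.last e) = u 0) :
    ∑' z : dominated (d + 1) e, weight u v z = ∑' z : ↑(dominated d (e + 1))ᶜ, weight u' v' z := by
  rw [← (dominatedEquiv d e).tsum_eq]
  refine tsum_congr fun z => ?_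
  simp only [weight, dominatedEquiv, Equiv.coe_fn_mk, Fin.prod_univ_succ (n := d),
    Fin.prod_univ_castSucc (n := e), Fin.tail, Fin.snoc_castSucc, Fin.snoc_last, hu', hv', hv'_last]
  ring

theorem dominated_zero_left (e : ℕ) : dominated 0 e = ∅ :=
  Set.eq_empty_of_forall_notMem fun _ ⟨m, _⟩ => m.elim0

theorem dominated_zero_right (d : ℕ) : dominated (d + 1) 0 = Set.univ :=
  Set.eq_univ_of_forall fun _ => ⟨0, fun i => i.elim0⟩

end DecIncPair

theorem Finset.sum_Icc_neg_one_pow_mul_add_eq {R : Type*} [CommRing R] {P Q : ℕ → R} {ℓ m : ℕ}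
    (hℓm : ℓ ≤ m) (hPQ : ∀ k, ℓ ≤ k → k < m → P k = Q (k + 1)) :
    ∑ k ∈ Icc ℓ m, (-1) ^ k * (P k + Q k) = (-1) ^ ℓ * Q ℓ + (-1) ^ m * P m := by
  induction m, hℓm using Nat.le_induction with
  | base => simp only [Icc_self, sum_singleton]; ring
  | succ m hℓm ih =>
    rw [sum_Icc_succ_top (by omega), ih fun k h1 h2 => hPQ k h1 (by omega), ← hPQ m hℓm (by omega),
      pow_succ]
    ring

section Lseries

variable {R : Type*} [NormedCommRing R]

open DecIncPair

noncomputable def dominatedPart (f : ℕ → ℕ → R) (ℓ j k : ℕ) : R :=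
  ∑' z : dominated (j + 1 - k) (k - ℓ), weight (fun i => f (k + i)) (fun i => f (ℓ + i)) z.1

noncomputable def undominatedPart (f : ℕ → ℕ → R) (ℓ j k : ℕ) : R :=
  ∑' z : ↑(dominated (j + 1 - k) (k - ℓ))ᶜ, weight (fun i => f (k + i)) (fun i => f (ℓ + i)) z.1

theorem Lser_mul_Lstar [IsUltrametricDist R] [CompleteSpace R] {f : ℕ → ℕ → R} {ℓ j k : ℕ}
    (hf : ∀ m, ℓ ≤ m → m ≤ j → Tendsto (fun i => ‖f m i‖) atTop (𝓝 0))
    (hℓ : 1 ≤ ℓ) (hℓk : ℓ ≤ k) (hkj : k ≤ j + 1) :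
    Lser f k j * Lstar f ℓ (k - 1) = dominatedPart f ℓ j k + undominatedPart f ℓ j k := by
  rw [Lser, Lstar, show k - 1 + 1 - ℓ = k - ℓ by omega]
  exact tsum_mul_tsum_eq_tsum_dominated_add_tsum_compl
    (fun i => hf _ (by omega) (by have := i.isLt; omega))
    (fun i => hf _ (by omega) (by have := i.isLt; omega))

theorem dominatedPart_eq_undominatedPart_succ (f : ℕ → ℕ → R) {ℓ j k : ℕ} (hℓk : ℓ ≤ k)
    (hkj : k ≤ j) : dominatedPart f ℓ j k = undominatedPart f ℓ j (k + 1) := by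
  rw [dominatedPart, undominatedPart, show j + 1 - k = j - k + 1 by omega,
    show j + 1 - (k + 1) = j - k by omega, show k + 1 - ℓ = k - ℓ + 1 by omega]
  refine tsum_dominated_eq_tsum_compl (fun i => ?_) (fun i => rfl) ?_
  · simp only [Fin.val_succ, add_assoc, add_comm 1]
  · simp only [Fin.val_last, Fin.val_zero]
    congr 1
    omega

theorem undominatedPart_self (f : ℕ → ℕ → R) {ℓ j : ℕ} (hℓj : ℓ ≤ j) :
    undominatedPart f ℓ j ℓ = 0 := by
  rw [undominatedPart, show j + 1 - ℓ = j - ℓ + 1 by omega, Nat.sub_self, dominated_zero_right,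
    Set.compl_univ, tsum_empty]

theorem dominatedPart_succ_self (f : ℕ → ℕ → R) (ℓ j : ℕ) : dominatedPart f ℓ j (j + 1) = 0 := by
  rw [dominatedPart, Nat.sub_self, dominated_zero_left, tsum_empty]

theorem tsum_prod_fin_zero {p : (Fin 0 → ℕ) → Prop} (hp : p Fin.elim0) (u : Fin 0 → ℕ → R) :
    ∑' g : Subtype p, ∏ m, u m (g.1 m) = 1 :=
  (tsum_eq_single ⟨Fin.elim0, hp⟩ fun _ hg => (hg (Subsingleton.elim _ _)).elim).trans
    (Fin.prod_univ_zero _)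

theorem Lser_succ_self (f : ℕ → ℕ → R) (j : ℕ) : Lser f (j + 1) j = 1 := by
  rw [Lser, Nat.sub_self]
  exact tsum_prod_fin_zero (fun i => i.elim0) fun m => f (j + 1 + m)

theorem Lstar_pred_self (f : ℕ → ℕ → R) {ℓ : ℕ} (hℓ : 1 ≤ ℓ) : Lstar f ℓ (ℓ - 1) = 1 := by
  rw [Lstar, Nat.sub_add_cancel hℓ, Nat.sub_self]
  exact tsum_prod_fin_zero (fun i => i.elim0) fun m => f (ℓ + m)

end Lseries

theorem stmt1_general {R : Type*} [NormedCommRing R] [IsUltrametricDist R] [CompleteSpace R]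
    (n : ℕ) (f : ℕ → ℕ → R)
    (hf : ∀ m, 1 ≤ m → m ≤ n → Filter.Tendsto (fun i => ‖f m i‖) Filter.atTop (nhds 0))
    (ℓ j : ℕ) (hℓ : 1 ≤ ℓ) (hℓj : ℓ ≤ j) (hj : j ≤ n) :
    (-1 : R) ^ j * Lstar f ℓ j =
      (∑ k ∈ Finset.Icc (ℓ + 1) j,
        (-1 : R) ^ k * Lser f k j * Lstar f ℓ (k - 1))
        + (-1 : R) ^ ℓ * Lser f ℓ j := by
  have hsplit : ∀ k ∈ Finset.Icc ℓ (j + 1), (-1 : R) ^ k * (Lser f k j * Lstar f ℓ (k - 1)) =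
      (-1) ^ k * (dominatedPart f ℓ j k + undominatedPart f ℓ j k) := fun k hk => by
    rw [Finset.mem_Icc] at hk
    rw [Lser_mul_Lstar (fun m h1 h2 => hf m (by omega) (by omega)) hℓ hk.1 hk.2]
  have hvanish :
      ∑ k ∈ Finset.Icc ℓ (j + 1), (-1 : R) ^ k * (Lser f k j * Lstar f ℓ (k - 1)) = 0 := by
    rw [Finset.sum_congr rfl hsplit, Finset.sum_Icc_neg_one_pow_mul_add_eq (by omega)
        fun k h1 h2 => dominatedPart_eq_undominatedPart_succ f h1 (by omega),
      undominatedPart_self f hℓj, dominatedPart_succ_self]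
    ring
  rw [Finset.sum_Icc_succ_top (by omega), Finset.Icc_eq_cons_Ioc hℓj, Finset.sum_cons,
    ← Finset.Icc_add_one_left_eq_Ioc, Lser_succ_self, Lstar_pred_self f hℓ,
    Nat.add_sub_cancel] at hvanish
  rw [pow_succ] at hvanish
  simp only [mul_assoc]
  linear_combination -hvanish

/-- For all integers `1 ≤ ℓ ≤ j ≤ n`, the identity
`(−1)^j · L*(ℓ,j) = Σ_{k=ℓ+1}^{j} (−1)^k · L(k,j) · L*(ℓ,k−1) + (−1)^ℓ · L(ℓ,j)`
holds in the complete nonarchimedean normed commutative ring `R`. -/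
theorem stmt1 {R : Type*} [NormedCommRing R] [IsUltrametricDist R] [CompleteSpace R]
    (n : ℕ) (hn : 1 ≤ n) (f : ℕ → ℕ → R)
    (hf : ∀ m, 1 ≤ m → m ≤ n → Filter.Tendsto (fun i => ‖f m i‖) Filter.atTop (nhds 0))
    (ℓ j : ℕ) (hℓ : 1 ≤ ℓ) (hℓj : ℓ ≤ j) (hj : j ≤ n) :
    (-1 : R) ^ j * Lstar f ℓ j =
      (∑ k ∈ Finset.Icc (ℓ + 1) j,
        (-1 : R) ^ k * Lser f k j * Lstar f ℓ (k - 1))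
        + (-1 : R) ^ ℓ * Lser f ℓ j :=
  stmt1_general n f hf ℓ j hℓ hℓj hj
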